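/- arXiv:1404.4560 — 5 statements merged into one kernel-verified Lean document; each statement's English description precedes it below -/
import Mathlib

section
/- Let α and α' be two length-m scoring vectors over the rationals. If there exist rationals a > 0 and b such that α'_i = a·α_i + b for every i ∈ {1,…,m}, then for every multiset of votes (linear orders over m candidates), the set of candidates with maximal total score under α equals the set of candidates with maximal total score under α'. -/
/-- A vote over m candidates is a bijection from positions to candidates (both `Fin m`);
the candidate in position i receives `α i` points. -/
def score {m : ℕ} (α : Fin m → ℚ) (V : Multiset (Equiv.Perm (Fin m))) (c : Fin m) : ℚ :=
  (V.map fun v => α (v.symm c)).sum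

/-- Winners: candidates with maximal total score. -/
def winners {m : ℕ} (α : Fin m → ℚ) (V : Multiset (Equiv.Perm (Fin m))) : Set (Fin m) :=
  {c | ∀ d, score α V d ≤ score α V c}

lemma score_affine {m : ℕ} (α : Fin m → ℚ) (a b : ℚ) (V : Multiset (Equiv.Perm (Fin m)))
    (c : Fin m) : score (fun i => a * α i + b) V c = a * score α V c + V.card * b := by
  simp only [score, Multiset.sum_map_add, Multiset.sum_map_mul_left, Multiset.map_const',
    Multiset.sum_replicate, nsmul_eq_mul]

lemma winners_affine {m : ℕ} (α : Fin m → ℚ) {a : ℚ} (ha : 0 < a) (b : ℚ)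
    (V : Multiset (Equiv.Perm (Fin m))) : winners (fun i => a * α i + b) V = winners α V := by
  have hmono : StrictMono fun x : ℚ => a * x + V.card * b := fun x y hxy => by
    simpa using mul_lt_mul_of_pos_left hxy ha
  ext c
  simp only [winners, Set.mem_ofPred_eq, score_affine, hmono.le_iff_le]

theorem stmt_1_general (m : ℕ) (α α' : Fin m → ℚ)
    (a b : ℚ) (ha : 0 < a) (h : ∀ i, α' i = a * α i + b)
    (V : Multiset (Equiv.Perm (Fin m))) :
    winners α V = winners α' V := by
  obtain rfl : α' = fun i => a * α i + b := funext h
  exact (winners_affine α ha b V).symm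

/-- Positive affine transformations of a scoring vector preserve winner sets. -/
theorem stmt_1 (m : ℕ) (α α' : Fin m → ℚ) (hα : Antitone α) (hα' : Antitone α')
    (a b : ℚ) (ha : 0 < a) (h : ∀ i, α' i = a * α i + b)
    (V : Multiset (Equiv.Perm (Fin m))) :
    winners α V = winners α' V :=
  stmt_1_general m α α' a b ha h V
end

section
/- Let f be a pure scoring-rule generator, i.e., for each m ≥ 1, f(m) = (α^m₁,…,α^m_m) is a nonincreasing rational vector, and for each m ≥ 2 there is an index whose deletion from f(m) yields exactly f(m−1). Then for all m' ≥ m ≥ 1 and all i, j with 1 ≤ i ≤ m and 0 ≤ j ≤ m−1: α^{m'}_i ≥ α^m_i and α^{m'}_{m'−j} ≤ α^m_{m−j}. In particular, if α^m₄ > α^m_{m−2} for some m ≥ 6, then α^{m'}₄ > α^{m'}_{m'−2} for all m' ≥ m. -/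
/-- A pure scoring-rule generator: each length-m vector is nonincreasing, and each length-(m+1)
vector arises from the length-m vector by inserting one new entry (equivalently, some component
of the longer vector can be deleted to recover the shorter one). -/
def IsPureGen (f : (m : ℕ) → Fin m → ℚ) : Prop :=
  (∀ m, Antitone (f m)) ∧
  ∀ m : ℕ, 1 ≤ m → ∃ j : Fin (m + 1), ∀ i : Fin m, f m i = f (m + 1) (j.succAbove i)

/-!
Inserting one entry into a nonincreasing vector shifts every old entry by at most one place, so
the entry at front position `i` moves to position `i` or `i + 1`, which can only raise the value
sitting at position `i`; symmetrically from the back. Induction on the length gives both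
inequalities, and the strict inequality at positions 4 and `m - 2` is squeezed between them.
-/

lemma Fin.castSucc_le_succAbove {m : ℕ} (p : Fin (m + 1)) (i : Fin m) :
    i.castSucc ≤ p.succAbove i := by
  rw [Fin.succAbove]
  split <;> simp [Fin.le_iff_val_le_val]

lemma Fin.succAbove_le_succ {m : ℕ} (p : Fin (m + 1)) (i : Fin m) :
    p.succAbove i ≤ i.succ := by
  rw [Fin.succAbove]
  split <;> simp [Fin.le_iff_val_le_val]

namespace IsPureGen

variable {f : (m : ℕ) → Fin m → ℚ}

lemma le_succ_castSucc (hf : IsPureGen f) {m : ℕ} (hm : 1 ≤ m) (i : Fin m) :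
    f m i ≤ f (m + 1) i.castSucc := by
  obtain ⟨p, hp⟩ := hf.2 m hm
  exact hp i ▸ hf.1 (m + 1) (p.castSucc_le_succAbove i)

lemma succ_succ_le (hf : IsPureGen f) {m : ℕ} (hm : 1 ≤ m) (i : Fin m) :
    f (m + 1) i.succ ≤ f m i := by
  obtain ⟨p, hp⟩ := hf.2 m hm
  exact hp i ▸ hf.1 (m + 1) (p.succAbove_le_succ i)

lemma le_castLE (hf : IsPureGen f) {m m' : ℕ} (hm : 1 ≤ m) (h : m ≤ m') (i : Fin m) :
    f m i ≤ f m' (Fin.castLE h i) := by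
  induction m', h using Nat.le_induction with
  | base => simp
  | succ n hn ih => exact ih.trans (hf.le_succ_castSucc (hm.trans hn) (Fin.castLE hn i))

lemma rev_castLE_le (hf : IsPureGen f) {m m' : ℕ} (hm : 1 ≤ m) (h : m ≤ m') (i : Fin m) :
    f m' (Fin.castLE h i).rev ≤ f m i.rev := by
  induction m', h using Nat.le_induction with
  | base => simp
  | succ n hn ih =>
    refine le_trans ?_ ih
    have hstep := hf.succ_succ_le (hm.trans hn) (Fin.castLE hn i).rev
    rwa [← Fin.rev_castSucc] at hstep

end IsPureGen

/-- Monotonicity of pure generators (0-based indices): entries counted from the front can only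
grow, entries counted from the back can only shrink; in particular the condition
α^m₄ > α^m_{m−2} (0-based: index 3 vs index m−3) propagates to all larger lengths. -/
theorem stmt_4 (f : (m : ℕ) → Fin m → ℚ) (hf : IsPureGen f)
    (m m' : ℕ) (h1 : 1 ≤ m) (h : m ≤ m') :
    (∀ i : Fin m, f m i ≤ f m' ⟨i.val, lt_of_lt_of_le i.isLt h⟩) ∧
    (∀ j : ℕ, j ≤ m - 1 →
      f m' ⟨m' - 1 - j, by omega⟩ ≤ f m ⟨m - 1 - j, by omega⟩) ∧
    ((h6 : 6 ≤ m) → f m ⟨3, by omega⟩ > f m ⟨m - 3, by omega⟩ →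
      ∀ m'' : ℕ, (hm'' : m ≤ m'') →
        f m'' ⟨3, by omega⟩ > f m'' ⟨m'' - 3, by omega⟩) := by
  have back : ∀ m', (h : m ≤ m') → ∀ j : ℕ, (hj : j ≤ m - 1) →
      f m' ⟨m' - 1 - j, by omega⟩ ≤ f m ⟨m - 1 - j, by omega⟩ := by
    intro m' h j hj
    have key := hf.rev_castLE_le h1 h ⟨j, by omega⟩
    convert key using 3 <;> simp only [Fin.val_rev, Fin.val_castLE] <;> omega
  refine ⟨hf.le_castLE h1 h, back m' h, fun h6 hgt m'' hm'' => ?_⟩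
  calc f m'' ⟨m'' - 3, by omega⟩ ≤ f m ⟨m - 3, by omega⟩ := back m'' hm'' 2 (by omega)
    _ < f m ⟨3, by omega⟩ := hgt
    _ ≤ f m'' ⟨3, by omega⟩ := hf.le_castLE h1 hm'' ⟨3, by omega⟩
end

section
/- There is no pure scoring-rule generator g over the integers with the following property: for every odd m ≥ 5, the normalization of g(m) equals the vector whose consecutive gaps (differences of adjacent entries) from the top are 1, 2, 4, …, 2^{(m−3)/2}, 2^{(m−3)/2}, …, 4, 2, 1. Equivalently: no sequence of nonincreasing integer vectors (β^m)_{m≥1}, where each β^m arises from β^{m−1} by inserting one entry, satisfies that for every odd m ≥ 5 the vector β^m is a positive affine transformation of the scoring vector with gap pattern 1,2,…,2^{(m−3)/2},2^{(m−3)/2},…,2,1. -/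
/-!
Inside a pure generator every shorter vector sits as a subsequence of every longer one, so the
scoring vector of length 5, with gaps proportional to `1, 2, 2, 1`, must reappear inside the one
of length `M = 2K + 3`, whose gaps are the tent `1, 2, …, 2^K, 2^K, …, 2, 1`. The five chosen
positions cut out four blocks of tent gaps with sums in ratio `1 : 2 : 2 : 1`. Equal outer blocks
are impossible on one monotone flank of the tent, where each gap exceeds the sum of all gaps
farther from the peak; so the blocks cover the peak and the total is at least `2^(K+1)`. On the
other hand the scale factor at length `M` is a positive integer (the top gap is `1`), which bounds
that total by `6a`, where `a` is the scale factor at length 5. Taking `K` large gives a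
contradiction.
-/

/-- A pure scoring-rule generator over ℤ. -/
def IsPureGenZ (f : (m : ℕ) → Fin m → ℤ) : Prop :=
  (∀ m, Antitone (f m)) ∧
  ∀ m : ℕ, 1 ≤ m → ∃ j : Fin (m + 1), ∀ i : Fin m, f m i = f (m + 1) (j.succAbove i)

/-- The nonincreasing integer vector of length m whose consecutive gaps (from the top) are
1, 2, 4, …, 2^{(m−3)/2}, 2^{(m−3)/2}, …, 4, 2, 1 (for odd m ≥ 5), with last entry 0. -/
def gapVec (m : ℕ) (i : Fin m) : ℤ :=
  ∑ j ∈ Finset.Ico i.val (m - 1), (2 : ℤ) ^ (min (j + 1) (m - 1 - j) - 1)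

open Finset

/-- The gap between entries `l` and `l + 1` of `gapVec (2 * K + 3)`: the tent
`1, 2, …, 2^K, 2^K, …, 2, 1`. -/
def tentWeight (K l : ℕ) : ℕ := 2 ^ min l (2 * K + 1 - l)

lemma sum_Ico_two_pow_lt {a b c d : ℕ} (hbc : b ≤ c) (hcd : c < d) :
    ∑ l ∈ Ico a b, 2 ^ l < ∑ l ∈ Ico c d, 2 ^ l :=
  calc ∑ l ∈ Ico a b, 2 ^ l < 2 ^ b := Nat.geomSum_lt le_rfl fun _ hl => (mem_Ico.1 hl).2
    _ ≤ 2 ^ c := Nat.pow_le_pow_right two_pos hbc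
    _ ≤ ∑ l ∈ Ico c d, 2 ^ l :=
      single_le_sum (f := (2 ^ ·)) (fun _ _ => Nat.zero_le _) (mem_Ico.2 ⟨le_rfl, hcd⟩)

lemma two_pow_le_sum_tentWeight {K x₀ x₁ x₃ x₄ : ℕ} (h₀₁ : x₀ < x₁) (h₁₃ : x₁ ≤ x₃)
    (h₃₄ : x₃ < x₄) (h₄ : x₄ ≤ 2 * K + 2)
    (heq : ∑ l ∈ Ico x₀ x₁, tentWeight K l = ∑ l ∈ Ico x₃ x₄, tentWeight K l) :
    2 ^ (K + 1) ≤ ∑ l ∈ Ico x₀ x₄, tentWeight K l := by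
  rcases le_or_gt x₄ (K + 1) with hleft | h
  · have hw : ∀ l, l < x₄ → tentWeight K l = 2 ^ l := fun l hl => by
      rw [tentWeight]; congr 1; omega
    rw [sum_congr rfl fun l hl => hw l (by simp at hl; omega),
      sum_congr rfl fun l hl => hw l (by simp at hl; omega)] at heq
    exact absurd heq (sum_Ico_two_pow_lt h₁₃ h₃₄).ne
  rcases le_or_gt (K + 1) x₀ with hright | h'
  · have hw : ∀ l, x₀ ≤ l → tentWeight K l = 2 ^ (2 * K + 1 - l) := fun l hl => by
      rw [tentWeight]; congr 1; omega
    rw [sum_congr rfl fun l hl => hw l (by simp at hl; omega),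
      sum_congr rfl fun l hl => hw l (by simp at hl; omega),
      sum_Ico_reflect (2 ^ ·) x₀ (by omega), sum_Ico_reflect (2 ^ ·) x₃ (by omega)] at heq
    exact absurd heq (sum_Ico_two_pow_lt (by omega) (by omega)).ne'
  have hK : tentWeight K K = 2 ^ K := by rw [tentWeight]; congr 1; omega
  have hK₁ : tentWeight K (K + 1) = 2 ^ K := by rw [tentWeight]; congr 1; omega
  calc 2 ^ (K + 1) = ∑ l ∈ Ico K (K + 2), tentWeight K l := by
        rw [sum_Ico_succ_top (by omega), sum_Ico_succ_top le_rfl, Ico_self, sum_empty, hK, hK₁]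
        ring
    _ ≤ ∑ l ∈ Ico x₀ x₄, tentWeight K l := sum_le_sum_of_subset (Ico_subset_Ico (by omega) h)

lemma gapVec_sub_gapVec_eq_sum_tentWeight (K : ℕ) {i j : Fin (2 * K + 3)} (hij : i ≤ j) :
    gapVec (2 * K + 3) i - gapVec (2 * K + 3) j = ∑ l ∈ Ico (i : ℕ) j, (tentWeight K l : ℤ) := by
  rw [gapVec, gapVec, ← sum_Ico_consecutive _ hij (by omega), add_sub_cancel_right]
  push_cast [tentWeight]
  exact sum_congr rfl fun l _ => by congr 1; omega

lemma IsPureGenZ.exists_strictMono {g : (m : ℕ) → Fin m → ℤ} (hg : IsPureGenZ g) {m n : ℕ}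
    (hm : 1 ≤ m) (hmn : m ≤ n) : ∃ ι : Fin m → Fin n, StrictMono ι ∧ ∀ i, g m i = g n (ι i) := by
  induction n, hmn using Nat.le_induction with
  | base => exact ⟨id, strictMono_id, fun _ => rfl⟩
  | succ n hmn ih =>
    obtain ⟨ι, hι, hgι⟩ := ih
    obtain ⟨j, hj⟩ := hg.2 n (hm.trans hmn)
    exact ⟨j.succAbove ∘ ι, (Fin.strictMono_succAbove j).comp hι, fun i => (hgι i).trans (hj _)⟩

section Affine

variable {α : Type*} {f v : α → ℤ} {a b : ℚ}

lemma sub_eq_mul_sub_of_affine (h : ∀ i, (f i : ℚ) = a * v i + b) (i j : α) :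
    ((f i - f j : ℤ) : ℚ) = a * ((v i - v j : ℤ) : ℚ) := by
  push_cast
  rw [h i, h j]
  ring

lemma one_le_of_affine (h : ∀ i, (f i : ℚ) = a * v i + b) (ha : 0 < a) {i j : α}
    (hij : v i - v j = 1) : 1 ≤ a := by
  have hfa := sub_eq_mul_sub_of_affine h i j
  rw [hij, Int.cast_one, mul_one] at hfa
  rw [← hfa] at ha ⊢
  exact_mod_cast (Int.cast_pos.1 ha : 0 < f i - f j)

end Affine

lemma two_pow_le_of_gapVec_embedding {K : ℕ} {ι : Fin 5 → Fin (2 * K + 3)} (hι : StrictMono ι)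
    {a a' : ℚ} (ha' : 1 ≤ a') (hrel : ∀ p q, a * ((gapVec 5 p - gapVec 5 q : ℤ) : ℚ) =
      a' * ((gapVec (2 * K + 3) (ι p) - gapVec (2 * K + 3) (ι q) : ℤ) : ℚ)) :
    2 ^ (K + 1) ≤ 6 * a := by
  have hsum (p q : Fin 5) (hpq : p ≤ q) : a * ((gapVec 5 p - gapVec 5 q : ℤ) : ℚ) =
      a' * ((∑ l ∈ Ico (ι p : ℕ) (ι q), tentWeight K l : ℕ) : ℚ) := by
    rw [hrel, gapVec_sub_gapVec_eq_sum_tentWeight K (hι.monotone hpq)]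
    push_cast; rfl
  have h₀₁ := hsum 0 1 (by decide)
  have h₃₄ := hsum 3 4 (by decide)
  have h₀₄ := hsum 0 4 (by decide)
  rw [show gapVec 5 0 - gapVec 5 1 = 1 by decide] at h₀₁
  rw [show gapVec 5 3 - gapVec 5 4 = 1 by decide] at h₃₄
  rw [show gapVec 5 0 - gapVec 5 4 = 6 by decide] at h₀₄
  have hpeak := two_pow_le_sum_tentWeight (K := K) (hι (by decide : (0 : Fin 5) < 1))
    (hι.monotone (by decide : (1 : Fin 5) ≤ 3)) (hι (by decide : (3 : Fin 5) < 4))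
    (by have := (ι 4).isLt; omega)
    (by exact_mod_cast mul_left_cancel₀ (by positivity) (h₀₁.symm.trans h₃₄))
  calc (2 : ℚ) ^ (K + 1) ≤ a' * 2 ^ (K + 1) := le_mul_of_one_le_left (by positivity) ha'
    _ ≤ a' * ((∑ l ∈ Ico (ι 0 : ℕ) (ι 4), tentWeight K l : ℕ) : ℚ) := by
      gcongr; exact_mod_cast hpeak
    _ = 6 * a := by rw [← h₀₄]; push_cast; ring

/-- No pure generator over the integers produces, at every odd length m ≥ 5, a vector that is
a positive affine transformation of `gapVec m` (i.e., normalizes to it). -/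
theorem stmt_6 :
    ¬ ∃ g : (m : ℕ) → Fin m → ℤ, IsPureGenZ g ∧
      ∀ m : ℕ, Odd m → 5 ≤ m →
        ∃ a b : ℚ, 0 < a ∧ ∀ i : Fin m, (g m i : ℚ) = a * (gapVec m i : ℚ) + b := by
  rintro ⟨g, hg, hnorm⟩
  obtain ⟨a, _, -, h₅⟩ := hnorm 5 (by decide) le_rfl
  obtain ⟨n, hn⟩ := pow_unbounded_of_one_lt (6 * a) one_lt_two
  set K := n + 1
  obtain ⟨a', _, ha', hM⟩ := hnorm (2 * K + 3) (by simp [parity_simps]) (by omega)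
  have htop : gapVec (2 * K + 3) ⟨0, by omega⟩ - gapVec (2 * K + 3) ⟨1, by omega⟩ = 1 := by
    rw [gapVec_sub_gapVec_eq_sum_tentWeight K (Fin.mk_le_mk.2 zero_le_one)]
    simp [tentWeight]
  obtain ⟨ι, hι, hgι⟩ := hg.exists_strictMono (by norm_num) (by omega : 5 ≤ 2 * K + 3)
  have hpeak := two_pow_le_of_gapVec_embedding hι (one_le_of_affine hM ha' htop) fun p q => by
    rw [← sub_eq_mul_sub_of_affine h₅, hgι, hgι, sub_eq_mul_sub_of_affine hM]
  have : (2 : ℚ) ^ n ≤ 2 ^ (K + 1) := pow_le_pow_right₀ one_le_two (by omega)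
  linarith
end

section
/- Let (α_m)_{m≥1} be any family of coefficients occurring in a pure scoring rule over the naturals, let Pool be the (finite or infinite) set of all coefficients occurring, and assume |Pool| ≥ 2 with minimum k and let j = gcd of {a − k : a ∈ Pool, a ≠ k}. Then the generator obtained by replacing each coefficient a with (a − k)/j is still a pure generator over ℕ equivalent to the original at every length, and there is an M such that for all m ≥ M, the modified length-m vector has last entry 0 and the gcd of its nonzero entries is 1. -/
/-- A pure scoring-rule generator over ℕ. -/
def IsPureGenN (f : (m : ℕ) → Fin m → ℕ) : Prop :=
  (∀ m, Antitone (f m)) ∧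
  ∀ m : ℕ, 1 ≤ m → ∃ j : Fin (m + 1), ∀ i : Fin m, f m i = f (m + 1) (j.succAbove i)

/-! The affine change `a ↦ (a - k) / j` is monotone, so it maps pure generators to pure
generators, and the coefficient `k` becomes `0`. Since every coefficient persists to all greater
lengths, the last entry is eventually the minimum `0`, and the gcd of the length-`m` vector is a
divisibility-decreasing sequence of naturals, hence eventually constant; its limit divides every
coefficient of the new generator, whose coefficients have gcd `1` by the maximality of `j`. -/

theorem Nat.exists_forall_ge_eq_of_dvd_antitone {D : ℕ → ℕ}
    (hD : ∀ m m', m ≤ m' → D m' ∣ D m) : ∃ N, ∀ m, N ≤ m → D m = D N := by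
  by_cases hzero : ∀ m, D m = 0
  · exact ⟨0, fun m _ => by rw [hzero m, hzero 0]⟩
  obtain ⟨m₁, hm₁⟩ := not_forall.1 hzero
  obtain ⟨N, hN₁ : m₁ ≤ N, hmin⟩ :=
    (InvImage.wf D wellFounded_lt).has_min (Set.Ici m₁) ⟨m₁, Set.self_mem_Ici⟩
  have hN : 0 < D N := Nat.pos_of_ne_zero fun h => hm₁ (Nat.eq_zero_of_zero_dvd (h ▸ hD _ _ hN₁))
  exact ⟨N, fun m hm => le_antisymm (Nat.le_of_dvd hN (hD N m hm))
    (not_lt.1 (hmin m (hN₁.trans hm)))⟩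

namespace IsPureGenN

variable {f : (m : ℕ) → Fin m → ℕ}

theorem exists_eq_of_le (hf : IsPureGenN f) {m m' : ℕ} (h : m ≤ m') (i : Fin m) :
    ∃ i' : Fin m', f m i = f m' i' := by
  induction m', h using Nat.le_induction with
  | base => exact ⟨i, rfl⟩
  | succ n hmn ih =>
    obtain ⟨i', hi'⟩ := ih
    obtain ⟨p, hp⟩ := hf.2 n (i.pos.trans_le hmn)
    exact ⟨p.succAbove i', hi'.trans (hp i')⟩

theorem comp_monotone (hf : IsPureGenN f) {φ : ℕ → ℕ} (hφ : Monotone φ) :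
    IsPureGenN fun m i => φ (f m i) := by
  refine ⟨fun m => hφ.comp_antitone (hf.1 m), fun m hm => ?_⟩
  obtain ⟨p, hp⟩ := hf.2 m hm
  exact ⟨p, fun i => congrArg φ (hp i)⟩

theorem last_le (hf : IsPureGenN f) {m : ℕ} (hm : 1 ≤ m) (i : Fin m) :
    f m ⟨m - 1, by omega⟩ ≤ f m i :=
  hf.1 m (Fin.mk_le_mk.2 (by omega))

theorem gcd_dvd_gcd (hf : IsPureGenN f) {m m' : ℕ} (h : m ≤ m') :
    Finset.univ.gcd (f m') ∣ Finset.univ.gcd (f m) :=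
  Finset.dvd_gcd fun i _ => by
    obtain ⟨i', hi'⟩ := hf.exists_eq_of_le h i
    exact hi' ▸ Finset.gcd_dvd (Finset.mem_univ i')

theorem exists_forall_ge_gcd_dvd (hf : IsPureGenN f) :
    ∃ N, ∀ m, N ≤ m → ∀ (m' : ℕ) (i : Fin m'), Finset.univ.gcd (f m) ∣ f m' i := by
  obtain ⟨N, hN⟩ := Nat.exists_forall_ge_eq_of_dvd_antitone fun m m' h => hf.gcd_dvd_gcd h
  refine ⟨N, fun m hm m' i => ?_⟩
  obtain ⟨i', hi'⟩ := hf.exists_eq_of_le (le_max_right m m') i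
  rw [hi', hN m hm, ← hN _ (hm.trans (le_max_left m m'))]
  exact Finset.gcd_dvd (Finset.mem_univ i')

end IsPureGenN

/-- Given a pure generator f over ℕ whose pool of coefficients has at least two elements,
with minimum k and with j the gcd of {a − k : a ∈ Pool}, the generator g with
g m i = (f m i − k)/j is a pure generator over ℕ, equivalent (a positive affine transformation,
f = j·g + k) to f at every length, and for all sufficiently large m its length-m vector has
last entry 0 and gcd of its (nonzero) entries equal to 1. -/
theorem stmt_9 (f : (m : ℕ) → Fin m → ℕ) (hf : IsPureGenN f)
    (Pool : Set ℕ) (hPool : Pool = {a | ∃ (m : ℕ) (i : Fin m), f m i = a})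
    (k : ℕ) (hk : k ∈ Pool) (hkmin : ∀ a ∈ Pool, k ≤ a)
    (htwo : ∃ a ∈ Pool, a ≠ k)
    (j : ℕ) (hjdvd : ∀ a ∈ Pool, j ∣ (a - k))
    (hjmax : ∀ d : ℕ, (∀ a ∈ Pool, d ∣ (a - k)) → d ∣ j)
    (g : (m : ℕ) → Fin m → ℕ) (hg : ∀ (m : ℕ) (i : Fin m), g m i = (f m i - k) / j) :
    IsPureGenN g ∧
    (∀ (m : ℕ) (i : Fin m), (f m i : ℚ) = (j : ℚ) * (g m i : ℚ) + (k : ℚ)) ∧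
    ∃ M : ℕ, ∀ m : ℕ, (hM : M ≤ m) → (hm : 1 ≤ m) →
      g m ⟨m - 1, by omega⟩ = 0 ∧ Finset.univ.gcd (g m) = 1 := by
  subst hPool
  have hj : 0 < j := by
    obtain ⟨a, ha, hak⟩ := htwo
    exact Nat.pos_of_ne_zero fun h0 =>
      hak (le_antisymm (Nat.sub_eq_zero_iff_le.1 (Nat.eq_zero_of_zero_dvd (h0 ▸ hjdvd a ha)))
        (hkmin a ha))
  have hfg : ∀ m i, f m i = j * g m i + k := fun m i => by
    rw [hg, Nat.mul_div_cancel' (hjdvd _ ⟨m, i, rfl⟩), Nat.sub_add_cancel (hkmin _ ⟨m, i, rfl⟩)]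
  have hgpure : IsPureGenN g := by
    simpa only [← hg] using hf.comp_monotone (φ := fun a => (a - k) / j)
      fun a b hab => Nat.div_le_div_right (Nat.sub_le_sub_right hab k)
  refine ⟨hgpure, fun m i => by rw [hfg]; push_cast; ring, ?_⟩
  obtain ⟨m₀, i₀, hi₀⟩ := hk
  obtain ⟨N, hN⟩ := hgpure.exists_forall_ge_gcd_dvd
  refine ⟨max m₀ N, fun m hM hm => ⟨?_, ?_⟩⟩
  · obtain ⟨i', hi'⟩ := hgpure.exists_eq_of_le (le_of_max_le_left hM) i₀
    have hzero : g m₀ i₀ = 0 := by rw [hg, hi₀, Nat.sub_self, Nat.zero_div]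
    exact Nat.le_zero.1 ((hgpure.last_le hm i').trans (hi'.symm.trans hzero).le)
  · have hdvd : j * Finset.univ.gcd (g m) ∣ j := by
      refine hjmax _ ?_
      rintro _ ⟨m', i, rfl⟩
      rw [hfg, Nat.add_sub_cancel]
      exact mul_dvd_mul_left j (hN m (le_of_max_le_right hM) m' i)
    exact Nat.dvd_one.1 ((Nat.mul_dvd_mul_iff_left hj).1 (by rwa [mul_one]))
end

section
/- Let m ≥ 2, let (α₁,…,α_m) be a scoring vector, and let i ≠ j and k ≠ l be indices in {1,…,m}. Then there exists a multiset V of exactly m votes (linear orders of m candidates c₁,…,c_m) such that, with A = α₁ + α₂ + … + α_m, every candidate's total score from V equals A, except that candidate c_i has score A + α_k − α_l and candidate c_j has score A + α_l − α_k. -/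
open Equiv

theorem Equiv.Perm.exists_apply_eq_and_apply_eq {β : Type*} [DecidableEq β] {a b x y : β}
    (hab : a ≠ b) (hxy : x ≠ y) : ∃ σ : Perm β, σ a = x ∧ σ b = y := by
  refine ⟨(swap a x).trans (swap (swap a x b) y), ?_, by simp⟩
  have hb : swap a x b ≠ x := by
    simpa using (swap a x).injective.ne hab.symm
  simp [swap_apply_of_ne_of_ne hb.symm hxy]

section

variable {m : ℕ} (α : Fin m → ℚ)

theorem score_cons (v : Perm (Fin m)) (V : Multiset (Perm (Fin m))) (c : Fin m) :
    score α (v ::ₘ V) c = α (v.symm c) + score α V c := by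
  simp [score]

theorem score_cons_erase {v : Perm (Fin m)} {V : Multiset (Perm (Fin m))} (hv : v ∈ V)
    (w : Perm (Fin m)) (c : Fin m) :
    score α (w ::ₘ V.erase v) c = score α V c - α (v.symm c) + α (w.symm c) := by
  conv_rhs => rw [← Multiset.cons_erase hv]
  rw [score_cons, score_cons]
  ring

/-- The m votes in which candidate `c` stands in position `π c + t`, for `t : Fin m`. -/
def rotations [NeZero m] (π : Perm (Fin m)) : Multiset (Perm (Fin m)) :=
  Finset.univ.val.map fun t => (π.trans (Equiv.addRight t)).symm

theorem card_rotations [NeZero m] (π : Perm (Fin m)) : Multiset.card (rotations π) = m := by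
  simp [rotations]

theorem symm_mem_rotations [NeZero m] (π : Perm (Fin m)) : π.symm ∈ rotations π :=
  Multiset.mem_map.2 ⟨0, Finset.mem_univ_val _, by rw [addRight_zero, Perm.one_def, trans_refl]⟩

theorem score_rotations [NeZero m] (π : Perm (Fin m)) (c : Fin m) :
    score α (rotations π) c = ∑ t, α t := by
  simp only [score, rotations, Multiset.map_map]
  exact Fintype.sum_equiv (Equiv.addLeft (π c)) _ _ fun t => by simp

end

theorem stmt_10_general (m : ℕ) (α : Fin m → ℚ)
    (i j k l : Fin m) (hij : i ≠ j) (hkl : k ≠ l) :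
    ∃ V : Multiset (Equiv.Perm (Fin m)),
      Multiset.card V = m ∧
      ∀ c : Fin m,
        score α V c =
          if c = i then (∑ t, α t) + α k - α l
          else if c = j then (∑ t, α t) + α l - α k
          else (∑ t, α t) := by
  have : NeZero m := NeZero.of_pos i.pos
  obtain ⟨π, hπi, hπj⟩ := Perm.exists_apply_eq_and_apply_eq hij hkl.symm
  have hmem := symm_mem_rotations π
  refine ⟨((swap i j).trans π).symm ::ₘ (rotations π).erase π.symm, ?_, fun c => ?_⟩
  · rw [Multiset.card_cons, Multiset.card_erase_add_one hmem, card_rotations]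
  rw [score_cons_erase α hmem, score_rotations]
  simp only [symm_symm, trans_apply]
  rcases eq_or_ne c i with rfl | hci
  · simp only [swap_apply_left, hπi, hπj, if_true]
    ring
  rcases eq_or_ne c j with rfl | hcj
  · simp only [swap_apply_right, hπi, hπj, if_neg hci, if_true]
    ring
  simp [swap_apply_of_ne_of_ne hci hcj, hci, hcj]

/-- There is a multiset of exactly m votes giving every candidate score A = Σ α, except that
candidate i gets A + α_k − α_l and candidate j gets A + α_l − α_k. -/
theorem stmt_10 (m : ℕ) (hm : 2 ≤ m) (α : Fin m → ℚ)
    (i j k l : Fin m) (hij : i ≠ j) (hkl : k ≠ l) :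
    ∃ V : Multiset (Equiv.Perm (Fin m)),
      Multiset.card V = m ∧
      ∀ c : Fin m,
        score α V c =
          if c = i then (∑ t, α t) + α k - α l
          else if c = j then (∑ t, α t) + α l - α k
          else (∑ t, α t) :=
  stmt_10_general m α i j k l hij hkl
end
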